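/- Let Ω ⊂ ℝⁿ be an open set and A ⊂ Ω a non-empty open set. Let f(x) = dist²(x, A^c) and let f⁻_Ω̄ be its extension to closure(Ω) with value inf_Ω f on ∂Ω. Then for every x ∈ closure(Ω): ℳ(λ; A^c)(x) = (1 + λ)·(f⁻_Ω̄(x) − C^l_{λ,Ω}(f⁻_Ω̄)(x)). -/

import Mathlib

noncomputable section
attribute [local instance] Classical.propDecidable

/-- Global lower Moreau envelope `M_λ(g)(x) = inf_{y∈ℝⁿ} {g(y) + λ|y−x|²}`. -/
def moreauLower {n : ℕ} (lam : ℝ) (g : EuclideanSpace ℝ (Fin n) → ℝ)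
    (x : EuclideanSpace ℝ (Fin n)) : ℝ :=
  ⨅ y : EuclideanSpace ℝ (Fin n), (g y + lam * ‖y - x‖ ^ 2)

/-- Global upper Moreau envelope `M^λ(g)(x) = sup_{y∈ℝⁿ} {g(y) − λ|y−x|²}`. -/
def moreauUpper {n : ℕ} (lam : ℝ) (g : EuclideanSpace ℝ (Fin n) → ℝ)
    (x : EuclideanSpace ℝ (Fin n)) : ℝ :=
  ⨆ y : EuclideanSpace ℝ (Fin n), (g y - lam * ‖y - x‖ ^ 2)

/-- Local lower Moreau envelope `M_{λ,Ω}(g)(x) = inf_{y∈closure Ω} {g(y) + λ|y−x|²}`. -/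
def moreauLowerLoc {n : ℕ} (lam : ℝ) (Ω : Set (EuclideanSpace ℝ (Fin n)))
    (g : EuclideanSpace ℝ (Fin n) → ℝ) (x : EuclideanSpace ℝ (Fin n)) : ℝ :=
  sInf ((fun y => g y + lam * ‖y - x‖ ^ 2) '' closure Ω)

/-- Local upper Moreau envelope `M^λ_Ω(g)(x) = sup_{y∈closure Ω} {g(y) − λ|y−x|²}`. -/
def moreauUpperLoc {n : ℕ} (lam : ℝ) (Ω : Set (EuclideanSpace ℝ (Fin n)))
    (g : EuclideanSpace ℝ (Fin n) → ℝ) (x : EuclideanSpace ℝ (Fin n)) : ℝ :=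
  sSup ((fun y => g y - lam * ‖y - x‖ ^ 2) '' closure Ω)

/-- The extension of `f` equal to `f` on `Ω` and to `inf_Ω f` off `Ω`
(this realizes both `f⁻_Ω̄` on `closure Ω` and `f⁻_ℝⁿ` on `ℝⁿ`). -/
def extMinus {n : ℕ} (Ω : Set (EuclideanSpace ℝ (Fin n)))
    (f : EuclideanSpace ℝ (Fin n) → ℝ) (x : EuclideanSpace ℝ (Fin n)) : ℝ :=
  if x ∈ Ω then f x else sInf (f '' Ω)

/-- The extension of `f` equal to `f` on `Ω` and to `sup_Ω f` off `Ω`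
(this realizes both `f⁺_Ω̄` on `closure Ω` and `f⁺_ℝⁿ` on `ℝⁿ`). -/
def extPlus {n : ℕ} (Ω : Set (EuclideanSpace ℝ (Fin n)))
    (f : EuclideanSpace ℝ (Fin n) → ℝ) (x : EuclideanSpace ℝ (Fin n)) : ℝ :=
  if x ∈ Ω then f x else sSup (f '' Ω)

/-- The quadratic multiscale medial axis map
`ℳ(λ; S)(x) = (1+λ)(dist²(x,S) − C^l_λ(dist²(·,S))(x))`, with
`C^l_λ(g) = M^λ(M_λ(g))`. -/
def medialAxisMap {n : ℕ} (lam : ℝ) (S : Set (EuclideanSpace ℝ (Fin n)))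
    (x : EuclideanSpace ℝ (Fin n)) : ℝ :=
  (1 + lam) * ((Metric.infDist x S) ^ 2
    - moreauUpper lam (moreauLower lam (fun y => (Metric.infDist y S) ^ 2)) x)

/-!
Since `dist(·, S)` is 1-Lipschitz, `λ/(1+λ)·dist²(x, S) ≤ dist²(y, S) + λ|y − x|²` for all
`x, y`, with equality at the point `y` dividing the segment from `x` to a nearest point of `S` in
the ratio `1 : λ`; hence `M_λ(dist²(·, S)) = λ/(1+λ)·dist²(·, S)`. For `S = Aᶜ` that minimiser
lies in `A ⊆ Ω` (or equals `x`), so the local envelope on `closure Ω` agrees with the global one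
there. Outside `closure Ω` the function `λ/(1+λ)·dist²(·, Aᶜ)` vanishes, so those points do not
contribute to the supremum in `M^λ`. Finally `f⁻_Ω̄ = f` on `closure Ω`: on `∂Ω ⊆ Aᶜ` both sides
are `0`.
-/
open Metric Set

lemma isGLB_image_of_mem_closure {α β : Type*} [TopologicalSpace α] [TopologicalSpace β]
    [LinearOrder β] [OrderTopology β] {f : α → β} {s : Set α} {a : α} (ha : a ∈ closure s)
    (hf : ContinuousWithinAt f s a) (hle : ∀ z ∈ s, f a ≤ f z) : IsGLB (f '' s) (f a) :=
  isGLB_of_mem_closure (forall_mem_image.2 hle) (hf.mem_closure_image ha)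

lemma ciSup_eq_csSup_image_of_forall_notMem_le {α β : Type*} [ConditionallyCompleteLattice β]
    {g : α → β} {T : Set α} (hg : BddAbove (range g)) {x : α} (hx : x ∈ T)
    (hle : ∀ y ∉ T, g y ≤ g x) : ⨆ y, g y = sSup (g '' T) := by
  have : Nonempty α := ⟨x⟩
  have hgT : BddAbove (g '' T) := hg.mono (image_subset_range g T)
  refine le_antisymm (ciSup_le fun y => ?_) (csSup_le ⟨g x, x, hx, rfl⟩ ?_)
  · by_cases hy : y ∈ T
    · exact le_csSup hgT ⟨y, hy, rfl⟩
    · exact (hle y hy).trans (le_csSup hgT ⟨x, hx, rfl⟩)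
  · rintro _ ⟨y, -, rfl⟩
    exact le_ciSup hg y

section InfDist

lemma mul_sq_infDist_le_sq_infDist_add_mul_sq_dist {E : Type*} [PseudoMetricSpace E]
    {lam : ℝ} (hlam : 0 ≤ lam) (S : Set E) (x y : E) :
    lam / (1 + lam) * infDist x S ^ 2 ≤ infDist y S ^ 2 + lam * dist y x ^ 2 := by
  have hxy : infDist x S ≤ infDist y S + dist y x := by
    simpa [dist_comm] using infDist_le_infDist_add_dist (x := x) (y := y) (s := S)
  rw [div_mul_eq_mul_div, div_le_iff₀ (by positivity)]
  nlinarith [sq_nonneg (infDist y S - lam * dist y x),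
    pow_le_pow_left₀ infDist_nonneg hxy 2]

variable {E : Type*} [NormedAddCommGroup E] [NormedSpace ℝ E]

lemma exists_infDist_eq_mul_infDist_and_dist_eq [ProperSpace E] {lam : ℝ} (hlam : 0 ≤ lam)
    (S : Set E) (x : E) :
    ∃ y, infDist y S = lam / (1 + lam) * infDist x S ∧ dist y x = infDist x S / (1 + lam) := by
  rcases S.eq_empty_or_nonempty with rfl | hS
  · exact ⟨x, by simp⟩
  obtain ⟨s, hs, hxs⟩ := exists_mem_closure_infDist_eq_dist hS x
  have h1 : 0 < 1 + lam := by linarith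
  set y := AffineMap.lineMap x s (1 + lam)⁻¹
  have hyx : dist y x = infDist x S / (1 + lam) := by
    rw [dist_lineMap_left, hxs, Real.norm_of_nonneg (by positivity), inv_mul_eq_div]
  have hys : dist y s = lam / (1 + lam) * infDist x S := by
    have hc : 0 ≤ 1 - (1 + lam)⁻¹ := sub_nonneg.2 (inv_le_one_of_one_le₀ (by linarith))
    rw [dist_lineMap_right, hxs, Real.norm_of_nonneg hc]
    congr 1
    field_simp
    ring
  refine ⟨y, le_antisymm ?_ ?_, hyx⟩
  · calc infDist y S = infDist y (closure S) := infDist_closure.symm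
      _ ≤ dist y s := infDist_le_dist_of_mem hs
      _ = _ := hys
  · have := infDist_le_infDist_add_dist (x := x) (y := y) (s := S)
    rw [dist_comm, hyx] at this
    have : infDist x S - infDist x S / (1 + lam) = lam / (1 + lam) * infDist x S := by
      field_simp
      ring
    linarith

lemma isLeast_image_sq_infDist_add_mul_sq_norm [ProperSpace E] {lam : ℝ} (hlam : 0 < lam)
    {S T : Set E} (hST : Sᶜ ⊆ T) {x : E} (hx : x ∈ T) :
    IsLeast ((fun y => infDist y S ^ 2 + lam * ‖y - x‖ ^ 2) '' T)
      (lam / (1 + lam) * infDist x S ^ 2) := by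
  refine ⟨?_, forall_mem_image.2 fun y _ => by
    simpa [dist_eq_norm] using mul_sq_infDist_le_sq_infDist_add_mul_sq_dist hlam.le S x y⟩
  obtain ⟨y, hyS, hyx⟩ := exists_infDist_eq_mul_infDist_and_dist_eq hlam.le S x
  have hyT : y ∈ T := by
    rcases (infDist_nonneg (x := x) (s := S)).eq_or_lt with h0 | hpos
    · rw [← h0, zero_div, dist_eq_zero] at hyx
      exact hyx ▸ hx
    · refine hST fun hy => ?_
      have : 0 < lam / (1 + lam) * infDist x S := by positivity
      rw [← hyS, infDist_zero_of_mem hy] at this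
      exact this.false
  refine ⟨y, hyT, ?_⟩
  dsimp only
  rw [← dist_eq_norm, hyS, hyx]
  field_simp
  ring

end InfDist

section Envelopes

variable {n : ℕ}

lemma moreauLower_sq_infDist {lam : ℝ} (hlam : 0 < lam) (S : Set (EuclideanSpace ℝ (Fin n))) :
    moreauLower lam (fun y => infDist y S ^ 2) = fun x => lam / (1 + lam) * infDist x S ^ 2 := by
  funext x
  rw [moreauLower, iInf, ← image_univ]
  exact (isLeast_image_sq_infDist_add_mul_sq_norm hlam (subset_univ _) (mem_univ x)).csInf_eq

lemma moreauLowerLoc_sq_infDist {lam : ℝ} (hlam : 0 < lam)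
    {S Ω : Set (EuclideanSpace ℝ (Fin n))} (hSΩ : Sᶜ ⊆ closure Ω) {x : EuclideanSpace ℝ (Fin n)}
    (hx : x ∈ closure Ω) :
    moreauLowerLoc lam Ω (fun y => infDist y S ^ 2) x = lam / (1 + lam) * infDist x S ^ 2 :=
  (isLeast_image_sq_infDist_add_mul_sq_norm hlam hSΩ hx).csInf_eq

lemma moreauUpper_mul_sq_infDist_eq_moreauUpperLoc {lam : ℝ} (hlam : 0 < lam)
    {S Ω : Set (EuclideanSpace ℝ (Fin n))} (hSΩ : Sᶜ ⊆ closure Ω) {x : EuclideanSpace ℝ (Fin n)}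
    (hx : x ∈ closure Ω) :
    moreauUpper lam (fun y => lam / (1 + lam) * infDist y S ^ 2) x
      = moreauUpperLoc lam Ω (fun y => lam / (1 + lam) * infDist y S ^ 2) x := by
  refine ciSup_eq_csSup_image_of_forall_notMem_le ⟨infDist x S ^ 2, ?_⟩ hx fun y hy => ?_
  · rintro _ ⟨y, rfl⟩
    have := mul_sq_infDist_le_sq_infDist_add_mul_sq_dist hlam.le S y x
    rw [dist_eq_norm, norm_sub_rev] at this
    dsimp only
    linarith
  · have hyS : y ∈ S := by_contra fun h => hy (hSΩ h)
    simp only [infDist_zero_of_mem hyS, sub_self, norm_zero]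
    have : 0 ≤ lam / (1 + lam) * infDist x S ^ 2 := by positivity
    nlinarith [sq_nonneg ‖y - x‖]

lemma moreauLowerLoc_congr {lam : ℝ} {Ω : Set (EuclideanSpace ℝ (Fin n))}
    {g g' : EuclideanSpace ℝ (Fin n) → ℝ} (h : EqOn g g' (closure Ω)) :
    moreauLowerLoc lam Ω g = moreauLowerLoc lam Ω g' := by
  funext x
  exact congrArg sInf (image_congr fun y hy => by rw [h hy])

lemma moreauUpperLoc_congr {lam : ℝ} {Ω : Set (EuclideanSpace ℝ (Fin n))}
    {g g' : EuclideanSpace ℝ (Fin n) → ℝ} (h : EqOn g g' (closure Ω)) :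
    moreauUpperLoc lam Ω g = moreauUpperLoc lam Ω g' := by
  funext x
  exact congrArg sSup (image_congr fun y hy => by rw [h hy])

lemma extMinus_eqOn_closure {Ω : Set (EuclideanSpace ℝ (Fin n))}
    {f : EuclideanSpace ℝ (Fin n) → ℝ} (hf : Continuous f)
    (hle : ∀ y ∈ closure Ω \ Ω, ∀ z ∈ Ω, f y ≤ f z) : EqOn (extMinus Ω f) f (closure Ω) := by
  intro y hy
  rw [extMinus]
  split_ifs with hyΩ
  · rfl
  · exact (isGLB_image_of_mem_closure hy hf.continuousWithinAt (hle y ⟨hy, hyΩ⟩)).csInf_eq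
      ((Nonempty.of_closure ⟨y, hy⟩).image f)

end Envelopes

theorem medialAxisMap_eq_local_open_general {n : ℕ} (Ω A : Set (EuclideanSpace ℝ (Fin n)))
    (hAΩ : A ⊆ Ω)
    (lam : ℝ) (hlam : 0 < lam) :
    ∀ x ∈ closure Ω,
      medialAxisMap lam Aᶜ x
        = (1 + lam) * (extMinus Ω (fun y => (Metric.infDist y Aᶜ) ^ 2) x
            - moreauUpperLoc lam Ω (moreauLowerLoc lam Ω
                (extMinus Ω (fun y => (Metric.infDist y Aᶜ) ^ 2))) x) := by
  intro x hx
  have hAΩ' : Aᶜᶜ ⊆ closure Ω := (compl_compl A).symm ▸ hAΩ.trans subset_closure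
  have hext : EqOn (extMinus Ω fun y => infDist y Aᶜ ^ 2) (fun y => infDist y Aᶜ ^ 2)
      (closure Ω) := by
    refine extMinus_eqOn_closure ((continuous_infDist_pt _).pow 2) fun y hy z _ => ?_
    rw [infDist_zero_of_mem (show y ∈ Aᶜ from fun hyA => hy.2 (hAΩ hyA))]
    exact pow_le_pow_left₀ le_rfl infDist_nonneg 2
  have hlower : EqOn (moreauLowerLoc lam Ω (extMinus Ω fun y => infDist y Aᶜ ^ 2))
      (fun y => lam / (1 + lam) * infDist y Aᶜ ^ 2) (closure Ω) := fun y hy => by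
    rw [moreauLowerLoc_congr hext, moreauLowerLoc_sq_infDist hlam hAΩ' hy]
  rw [medialAxisMap, hext hx, moreauUpperLoc_congr hlower, moreauLower_sq_infDist hlam,
    moreauUpper_mul_sq_infDist_eq_moreauUpperLoc hlam hAΩ' hx]

/-- For `Ω ⊂ ℝⁿ` open, `A ⊂ Ω` non-empty open, `f = dist²(·, Aᶜ)` and its
extension `f⁻_Ω̄`, one has, for all `x ∈ closure Ω`,
`ℳ(λ; Aᶜ)(x) = (1+λ)(f⁻_Ω̄(x) − C^l_{λ,Ω}(f⁻_Ω̄)(x))`. -/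
theorem medialAxisMap_eq_local_open {n : ℕ} (Ω A : Set (EuclideanSpace ℝ (Fin n)))
    (hΩo : IsOpen Ω) (hA : IsOpen A) (hAne : A.Nonempty) (hAΩ : A ⊆ Ω)
    (lam : ℝ) (hlam : 0 < lam) :
    ∀ x ∈ closure Ω,
      medialAxisMap lam Aᶜ x
        = (1 + lam) * (extMinus Ω (fun y => (Metric.infDist y Aᶜ) ^ 2) x
            - moreauUpperLoc lam Ω (moreauLowerLoc lam Ω
                (extMinus Ω (fun y => (Metric.infDist y Aᶜ) ^ 2))) x) :=
  medialAxisMap_eq_local_open_general Ω A hAΩ lam hlam
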